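/- Let G be a uniquely 4-colourable graph with a triangle on vertices v1, v2, v3 and a proper 4-colouring φ with φ(v_i) = i. Form G'' by adding vertices a, b, c with triangle abc and edges a v1, a v2, b v1, b v3, c v2, c v3. Label the arcs (v2, a), (c, a), (c, b), (v3, c) with the 4-cycle (1 2 3 4), and label all other (arbitrarily oriented) edges with id. Then no proper 4-colouring ψ of this labeled graph restricts on G to φ. -/

import Mathlib

/-!
Write `A, B, C` for the colours of `a, b, c` and read `(1 2 3 4)` as `x ↦ x + 1` on `Fin 4`.
With `ψ(vᵢ) = i - 1`, the identity-labelled edges `av₁, bv₁, bv₃, cv₂` and the labelled arcs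
`(v₂, a)`, `(v₃, c)` force `A, B ∈ {1, 3}` and `C ∈ {0, 2}`. The identity edge `ab` makes
`{A, B} = {1, 3}`, but the labelled arcs `(c, a)`, `(c, b)` require `C + 1 ∈ {1, 3}` to avoid
both `A` and `B`.
-/

/-- `P` is a partition of the vertex set of `G` into `k` nonempty independent sets. -/
def IsIndepPartition {V : Type*} (G : SimpleGraph V) (k : ℕ) (P : Set (Set V)) : Prop :=
  (∀ s ∈ P, s.Nonempty) ∧ (∀ v : V, ∃! s, s ∈ P ∧ v ∈ s) ∧
  (∀ s ∈ P, ∀ u ∈ s, ∀ v ∈ s, ¬ G.Adj u v) ∧ P.ncard = k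

/-- `G` is uniquely `k`-colourable. -/
def UniquelyColourable {V : Type*} (G : SimpleGraph V) (k : ℕ) : Prop :=
  ∃! P : Set (Set V), IsIndepPartition G k P

/-- `D` is an orientation of `G`. -/
def IsOrientation {V : Type*} (G : SimpleGraph V) (D : V → V → Prop) : Prop :=
  (∀ u v, D u v → G.Adj u v) ∧ (∀ u v, G.Adj u v → D u v ∨ D v u) ∧
  (∀ u v, D u v → ¬ D v u)

/-- The gadget graph `G''`: `G` together with a new triangle `a = inr 0`, `b = inr 1`,
`c = inr 2` and the edges `a v₁, a v₂, b v₁, b v₃, c v₂, c v₃`. -/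
def gadgetGraph {V : Type*} (G : SimpleGraph V) (v₁ v₂ v₃ : V) : SimpleGraph (V ⊕ Fin 3) :=
  SimpleGraph.fromRel (fun x y =>
    match x, y with
    | Sum.inl x', Sum.inl y' => G.Adj x' y'
    | Sum.inr i, Sum.inr j => i ≠ j
    | Sum.inr i, Sum.inl z =>
        (i = 0 ∧ (z = v₁ ∨ z = v₂)) ∨ (i = 1 ∧ (z = v₁ ∨ z = v₃)) ∨
        (i = 2 ∧ (z = v₂ ∨ z = v₃))
    | Sum.inl _, Sum.inr _ => False)

/-- The 4-cycle `(1 2 3 4)` on the four colours (colour `i ∈ {1,2,3,4}` is `i - 1 : Fin 4`). -/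
def p1234 : Equiv.Perm (Fin 4) :=
  ⟨![1, 2, 3, 0], ![3, 0, 1, 2], by decide, by decide⟩

theorem IsOrientation.apply_ne_of_adj_of_label_eq_one {W α : Type*} {H : SimpleGraph W}
    {D : W → W → Prop} {σ : W → W → Equiv.Perm α} {ψ : W → α} (hD : IsOrientation H D)
    (hψ : ∀ x y, D x y → σ x y (ψ x) ≠ ψ y) {x y : W} (hxy : H.Adj x y)
    (hσxy : D x y → σ x y = 1) (hσyx : D y x → σ y x = 1) : ψ x ≠ ψ y := by
  rcases hD.2.1 x y hxy with h | h
  · simpa [hσxy h] using hψ x y h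
  · simpa [hσyx h, eq_comm] using hψ y x h

theorem not_gadget_colour_constraints (A B C : Fin 4) (hA0 : A ≠ 0) (hA2 : p1234 1 ≠ A)
    (hB0 : B ≠ 0) (hB2 : B ≠ 2) (hC1 : C ≠ 1) (hC3 : p1234 2 ≠ C) (hAB : A ≠ B)
    (hCA : p1234 C ≠ A) (hCB : p1234 C ≠ B) : False := by
  revert A B C
  decide

theorem gadget_1234_blocks_general {V : Type*} (G : SimpleGraph V) (v₁ v₂ v₃ : V)
    (φ : V → Fin 4)
    (hφ1 : φ v₁ = 0) (hφ2 : φ v₂ = 1) (hφ3 : φ v₃ = 2)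
    (D : (V ⊕ Fin 3) → (V ⊕ Fin 3) → Prop)
    (hD : IsOrientation (gadgetGraph G v₁ v₂ v₃) D)
    (hv2a : D (Sum.inl v₂) (Sum.inr 0)) (hca : D (Sum.inr 2) (Sum.inr 0))
    (hcb : D (Sum.inr 2) (Sum.inr 1)) (hv3c : D (Sum.inl v₃) (Sum.inr 2))
    (σ : (V ⊕ Fin 3) → (V ⊕ Fin 3) → Equiv.Perm (Fin 4))
    (hσ1 : σ (Sum.inl v₂) (Sum.inr 0) = p1234) (hσ2 : σ (Sum.inr 2) (Sum.inr 0) = p1234)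
    (hσ3 : σ (Sum.inr 2) (Sum.inr 1) = p1234) (hσ4 : σ (Sum.inl v₃) (Sum.inr 2) = p1234)
    (hσid : ∀ x y, D x y →
      ¬ ((x = Sum.inl v₂ ∧ y = Sum.inr 0) ∨ (x = Sum.inr 2 ∧ y = Sum.inr 0) ∨
         (x = Sum.inr 2 ∧ y = Sum.inr 1) ∨ (x = Sum.inl v₃ ∧ y = Sum.inr 2)) → σ x y = 1) :
    ¬ ∃ ψ : (V ⊕ Fin 3) → Fin 4,
        (∀ v : V, ψ (Sum.inl v) = φ v) ∧ (∀ x y, D x y → σ x y (ψ x) ≠ ψ y) := by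
  rintro ⟨ψ, hres, hψ⟩
  have hv₁₂ : v₁ ≠ v₂ := ne_of_apply_ne φ (by simp [hφ1, hφ2])
  have hv₂₃ : v₂ ≠ v₃ := ne_of_apply_ne φ (by simp [hφ2, hφ3])
  have hid {x y} (hxy : (gadgetGraph G v₁ v₂ v₃).Adj x y) :=
    hD.apply_ne_of_adj_of_label_eq_one hψ hxy
  have hlabel {x y} (h : D x y) (hs : σ x y = p1234) : p1234 (ψ x) ≠ ψ y := hs ▸ hψ x y h
  have hav₁ : ψ (.inr 0) ≠ ψ (.inl v₁) := hid (by simp [gadgetGraph])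
    (hσid _ _ · (by simp)) (hσid _ _ · (by simp [hv₁₂]))
  have hbv₁ : ψ (.inr 1) ≠ ψ (.inl v₁) := hid (by simp [gadgetGraph])
    (hσid _ _ · (by simp)) (hσid _ _ · (by simp))
  have hbv₃ : ψ (.inr 1) ≠ ψ (.inl v₃) := hid (by simp [gadgetGraph])
    (hσid _ _ · (by simp)) (hσid _ _ · (by simp))
  have hcv₂ : ψ (.inr 2) ≠ ψ (.inl v₂) := hid (by simp [gadgetGraph])
    (hσid _ _ · (by simp)) (hσid _ _ · (by simp [hv₂₃]))
  have hab : ψ (.inr 0) ≠ ψ (.inr 1) := hid (by simp [gadgetGraph])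
    (hσid _ _ · (by simp)) (hσid _ _ · (by simp))
  have hv₂a := hlabel hv2a hσ1
  have hv₃c := hlabel hv3c hσ4
  simp only [hres, hφ1, hφ2, hφ3] at hav₁ hv₂a hbv₁ hbv₃ hcv₂ hv₃c
  exact not_gadget_colour_constraints _ _ _ hav₁ hv₂a hbv₁ hbv₃ hcv₂ hv₃c hab
    (hlabel hca hσ2) (hlabel hcb hσ3)

/-- With the `{id, (1234)}`-labeling in which the arcs `(v₂,a)`, `(c,a)`, `(c,b)`, `(v₃,c)`
carry the label `(1 2 3 4)` and all other arcs carry `id`, no proper 4-colouring of the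
labeled gadget graph restricts on `G` to the colouring `φ`. -/
theorem gadget_1234_blocks {V : Type*} (G : SimpleGraph V) (v₁ v₂ v₃ : V)
    (hG : UniquelyColourable G 4)
    (h12 : G.Adj v₁ v₂) (h13 : G.Adj v₁ v₃) (h23 : G.Adj v₂ v₃)
    (φ : V → Fin 4) (hφ : ∀ u v, G.Adj u v → φ u ≠ φ v)
    (hφ1 : φ v₁ = 0) (hφ2 : φ v₂ = 1) (hφ3 : φ v₃ = 2)
    (D : (V ⊕ Fin 3) → (V ⊕ Fin 3) → Prop)
    (hD : IsOrientation (gadgetGraph G v₁ v₂ v₃) D)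
    (hv2a : D (Sum.inl v₂) (Sum.inr 0)) (hca : D (Sum.inr 2) (Sum.inr 0))
    (hcb : D (Sum.inr 2) (Sum.inr 1)) (hv3c : D (Sum.inl v₃) (Sum.inr 2))
    (σ : (V ⊕ Fin 3) → (V ⊕ Fin 3) → Equiv.Perm (Fin 4))
    (hσ1 : σ (Sum.inl v₂) (Sum.inr 0) = p1234) (hσ2 : σ (Sum.inr 2) (Sum.inr 0) = p1234)
    (hσ3 : σ (Sum.inr 2) (Sum.inr 1) = p1234) (hσ4 : σ (Sum.inl v₃) (Sum.inr 2) = p1234)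
    (hσid : ∀ x y, D x y →
      ¬ ((x = Sum.inl v₂ ∧ y = Sum.inr 0) ∨ (x = Sum.inr 2 ∧ y = Sum.inr 0) ∨
         (x = Sum.inr 2 ∧ y = Sum.inr 1) ∨ (x = Sum.inl v₃ ∧ y = Sum.inr 2)) → σ x y = 1) :
    ¬ ∃ ψ : (V ⊕ Fin 3) → Fin 4,
        (∀ v : V, ψ (Sum.inl v) = φ v) ∧ (∀ x y, D x y → σ x y (ψ x) ≠ ψ y) :=
  gadget_1234_blocks_general G v₁ v₂ v₃ φ hφ1 hφ2 hφ3 D hD hv2a hca hcb hv3c σ hσ1 hσ2 hσ3 hσ4 hσid
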